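/- arXiv:1804.02482 — 3 statements merged into one kernel-verified Lean document; each statement's English description precedes it below -/
import Mathlib

section
/- (Lemma B.1) Let $r_1 \ge 2$ and $r_2 \ge 1$ be integers with $r_2 \le \frac{2}{3}\binom{r_1}{2}$, and set $A = \binom{r_1}{2}$. Then the set $\mathcal{H}_1$ of vectors in $\{-1, 0, 1\}^{A}$ having exactly $r_2$ nonzero coordinates contains a subset whose cardinality is at least $\exp\big(\frac{r_2}{2}\log\frac{A - r_2/2}{r_2}\big)$ and whose elements have pairwise Hamming distance strictly greater than $r_2/2$. -/
noncomputable section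

/-- Hamming distance between two vectors: the number of coordinates where they differ. -/
def hamming {ι : Type*} (v w : ι → ℝ) : ℕ := Nat.card {i // v i ≠ w i}

/-- ℓ0 norm: the number of nonzero coordinates. -/
def l0 {ι : Type*} (v : ι → ℝ) : ℕ := Nat.card {i // v i ≠ 0}

/-!
A Gilbert–Varshamov argument. Let `H` be the set of vectors in `{-1, 0, 1}^A` of weight `r`,
so `#H = C(A, r) 2^r`, and let `m = ⌊r/2⌋`. A maximal subset `B ⊆ H` whose points are pairwise
more than `m` apart has the property that the Hamming balls of radius `m` around `B` cover `H`,
so `#H ≤ #B · ∑_{k ≤ m} C(A, k) 2^k`. The terms of that sum at least double while `2k < A`,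
so it is at most `2 C(A, m) 2^m`. It remains to compare volumes: with `y = (A - r/2)/r ≥ 1`
and `s = ⌈r/2⌉` we have `y^(r/2) ≤ y^s`, and Bernoulli's inequality `(1 + 1/s)^s ≥ 2` together
with `y (1 + 1/s) ≤ 2 (A - r + 1)/r` and `C(A, r) ≥ C(A, m) ((A - r + 1)/r)^s` gives
`2 y^(r/2) C(A, m) 2^m ≤ C(A, r) 2^r`.
-/

open Finset Fintype

theorem hamming_eq_hammingDist {ι : Type*} [Fintype ι] (v w : ι → ℝ) :
    hamming v w = hammingDist v w := by
  rw [hamming, hammingDist, Nat.card_eq_fintype_card, Fintype.card_subtype]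

theorem l0_eq_hammingDist_zero {ι : Type*} [Fintype ι] (v : ι → ℝ) :
    l0 v = hammingDist v 0 := by
  rw [l0, hammingDist_zero_right, hammingNorm, Nat.card_eq_fintype_card, Fintype.card_subtype]

theorem Finset.exists_pairwise_not_rel_card_le_sum {α : Type*} (H : Finset α)
    (R : α → α → Prop) [DecidableRel R] (hrefl : ∀ x, R x x) (hsymm : ∀ x y, R x y → R y x) :
    ∃ B ⊆ H, (B : Set α).Pairwise (fun x y => ¬ R x y) ∧
      #H ≤ ∑ w ∈ B, #{v ∈ H | R v w} := by
  classical
  obtain ⟨B, hB, hmax⟩ := exists_max_image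
    (H.powerset.filter fun B : Finset α => (B : Set α).Pairwise fun x y => ¬ R x y) card
    ⟨∅, by simp⟩
  rw [mem_filter, mem_powerset] at hB
  have hcover : H ⊆ B.biUnion fun w => {v ∈ H | R v w} := by
    intro v hv
    by_contra hfar
    simp only [mem_biUnion, mem_filter, not_exists, not_and] at hfar
    have hvB : v ∉ B := fun h => hfar v h hv (hrefl v)
    have hins := hmax (insert v B) <| by
      rw [mem_filter, mem_powerset, coe_insert, Set.pairwise_insert]
      exact ⟨insert_subset hv hB.1, hB.2, fun w hw _ =>
        ⟨hfar w hw hv, fun h => hfar w hw hv (hsymm w v h)⟩⟩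
    rw [card_insert_of_notMem hvB] at hins
    omega
  exact ⟨B, hB.1, hB.2, (card_le_card hcover).trans card_biUnion_le⟩

section HammingCount

variable {ι α : Type*} [Fintype ι] [DecidableEq ι] [DecidableEq α] {T : Finset α} {w : ι → α}

theorem filter_piFinset_filter_ne_eq (hw : ∀ i, w i ∈ T) (D : Finset ι) :
    {v ∈ piFinset fun _ : ι => T | ({i | v i ≠ w i} : Finset ι) = D} =
      piFinset fun i => if i ∈ D then T.erase (w i) else {w i} := by
  ext v
  simp only [mem_filter, mem_piFinset, Finset.ext_iff, mem_univ, true_and, ← forall_and]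
  refine forall_congr' fun i => ?_
  split_ifs with hi <;> simp only [hi, iff_true, iff_false, not_not, mem_erase, mem_singleton]
  · tauto
  · exact ⟨And.right, fun h => ⟨h ▸ hw i, h⟩⟩

theorem card_filter_piFinset_hammingDist_eq (hw : ∀ i, w i ∈ T) (k : ℕ) :
    #{v ∈ piFinset fun _ : ι => T | hammingDist v w = k} =
      (Fintype.card ι).choose k * (#T - 1) ^ k := by
  rw [card_eq_sum_card_fiberwise (f := fun v => ({i | v i ≠ w i} : Finset ι))
    (t := powersetCard k univ)]
  · refine (sum_const_nat fun D hD => ?_).trans (by rw [card_powersetCard, card_univ])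
    rw [mem_powersetCard] at hD
    have hfiber : {v ∈ {v ∈ piFinset fun _ : ι => T | hammingDist v w = k} |
        ({i | v i ≠ w i} : Finset ι) = D} =
        {v ∈ piFinset fun _ : ι => T | ({i | v i ≠ w i} : Finset ι) = D} := by
      rw [filter_filter]
      refine filter_congr fun v _ => and_iff_right_of_imp fun h => ?_
      rw [hammingDist, h, hD.2]
    rw [hfiber, filter_piFinset_filter_ne_eq hw, card_piFinset]
    calc ∏ i, #(if i ∈ D then T.erase (w i) else {w i})
        = ∏ i, if i ∈ D then #T - 1 else 1 := by
          refine Fintype.prod_congr _ _ fun i => ?_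
          split_ifs
          · exact card_erase_of_mem (hw i)
          · exact card_singleton _
      _ = (#T - 1) ^ k := by rw [Fintype.prod_ite_mem, prod_const, hD.2]
  · intro v hv
    simp only [coe_filter, Set.mem_ofPred_eq] at hv
    simpa [hammingDist] using hv.2

theorem card_filter_piFinset_hammingDist_le (hw : ∀ i, w i ∈ T) (m : ℕ) :
    #{v ∈ piFinset fun _ : ι => T | hammingDist v w ≤ m} =
      ∑ k ∈ range (m + 1), (Fintype.card ι).choose k * (#T - 1) ^ k := by
  rw [card_eq_sum_card_fiberwise (f := fun v => hammingDist v w) (t := range (m + 1))]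
  · refine sum_congr rfl fun k hk => ?_
    rw [filter_filter, ← card_filter_piFinset_hammingDist_eq hw]
    refine congrArg card (filter_congr fun v _ => and_iff_right_of_imp fun h => ?_)
    rw [mem_range] at hk
    omega
  · intro v hv
    simp only [coe_filter, Set.mem_ofPred_eq] at hv
    simpa [Nat.lt_succ_iff] using hv.2

theorem exists_separated_subset_of_sphere (hw : ∀ i, w i ∈ T) (r m : ℕ) :
    ∃ B ⊆ {v ∈ piFinset fun _ : ι => T | hammingDist v w = r},
      (B : Set (ι → α)).Pairwise (fun u v => m < hammingDist u v) ∧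
      (Fintype.card ι).choose r * (#T - 1) ^ r ≤
        #B * ∑ k ∈ range (m + 1), (Fintype.card ι).choose k * (#T - 1) ^ k := by
  obtain ⟨B, hBS, hBsep, hSB⟩ := exists_pairwise_not_rel_card_le_sum
    {v ∈ piFinset fun _ : ι => T | hammingDist v w = r} (fun u v => hammingDist u v ≤ m)
    (by simp) (fun u v h => hammingDist_comm u v ▸ h)
  refine ⟨B, hBS, fun u hu v hv huv => not_le.1 (hBsep hu hv huv), ?_⟩
  rw [← card_filter_piFinset_hammingDist_eq hw, ← smul_eq_mul, ← sum_const]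
  refine hSB.trans (sum_le_sum fun u hu => ?_)
  rw [← card_filter_piFinset_hammingDist_le (mem_piFinset.1 (mem_filter.1 (hBS hu)).1)]
  exact card_le_card (filter_subset_filter _ (filter_subset _ _))

end HammingCount

theorem sum_range_succ_le_two_mul {a : ℕ → ℕ} {m : ℕ} (h : ∀ k < m, 2 * a k ≤ a (k + 1)) :
    ∑ k ∈ range (m + 1), a k ≤ 2 * a m := by
  induction m with
  | zero => simp [two_mul]
  | succ m ih =>
    rw [sum_range_succ, two_mul]
    exact Nat.add_le_add_right ((ih fun k hk => h k (by omega)).trans (h m (by omega))) _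

theorem sum_range_choose_mul_two_pow_le {n m : ℕ} (h : 2 * m ≤ n) :
    ∑ k ∈ range (m + 1), n.choose k * 2 ^ k ≤ 2 * (n.choose m * 2 ^ m) := by
  refine sum_range_succ_le_two_mul fun k hk => ?_
  calc 2 * (n.choose k * 2 ^ k) = n.choose k * 2 ^ (k + 1) := by ring
    _ ≤ n.choose (k + 1) * 2 ^ (k + 1) :=
        Nat.mul_le_mul_right _ (Nat.choose_le_succ_of_lt_half_left (by omega))

theorem Nat.choose_mul_pow_le_choose_add_mul_pow {A r m j : ℕ} (h : m + j ≤ r) :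
    A.choose m * (A + 1 - r) ^ j ≤ A.choose (m + j) * r ^ j := by
  induction j with
  | zero => simp
  | succ j ih =>
    have hstep : (A + 1 - r) * (m + j + 1) ≤ (A - (m + j)) * r :=
      Nat.mul_le_mul (by omega) (by omega)
    refine Nat.le_of_mul_le_mul_right ?_ (Nat.succ_pos (m + j))
    calc A.choose m * (A + 1 - r) ^ (j + 1) * (m + j + 1)
        = A.choose m * (A + 1 - r) ^ j * ((A + 1 - r) * (m + j + 1)) := by ring
      _ ≤ A.choose (m + j) * r ^ j * ((A - (m + j)) * r) :=
          Nat.mul_le_mul (ih (by omega)) hstep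
      _ = A.choose (m + j + 1) * (m + j + 1) * r ^ (j + 1) := by
          rw [Nat.choose_succ_right_eq]; ring
      _ = A.choose (m + (j + 1)) * r ^ (j + 1) * (m + j + 1) := by ring_nf

theorem choose_mul_div_pow_le_choose {A r m : ℕ} (hmr : m ≤ r) (hrA : r ≤ A) (hr : 0 < r) :
    (A.choose m : ℝ) * ((A - r + 1) / r) ^ (r - m) ≤ A.choose r := by
  have hnat := Nat.choose_mul_pow_le_choose_add_mul_pow (A := A) (r := r) (m := m) (j := r - m)
    (by omega)
  rw [Nat.add_sub_cancel' hmr] at hnat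
  have hcast : ((A + 1 - r : ℕ) : ℝ) = A - r + 1 := by
    rw [Nat.cast_sub (by omega)]; push_cast; ring
  rw [div_pow, ← mul_div_assoc, div_le_iff₀ (by positivity), ← hcast]
  exact_mod_cast hnat

theorem two_mul_pow_le_mul_one_add_inv_pow {x : ℝ} (hx : 0 ≤ x) {s : ℕ} (hs : 1 ≤ s) :
    2 * x ^ s ≤ (x * (1 + 1 / s)) ^ s := by
  have hbern : (2 : ℝ) ≤ (1 + 1 / s) ^ s := by
    have := one_add_mul_le_pow (a := (1 / s : ℝ)) (by linarith [show (0 : ℝ) ≤ 1 / s by positivity]) s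
    rwa [mul_one_div_cancel (by positivity), one_add_one_eq_two] at this
  rw [mul_pow, mul_comm 2]
  exact mul_le_mul_of_nonneg_left hbern (by positivity)

theorem exp_mul_log_mul_le_choose_mul_pow {A r : ℕ} (hr : 1 ≤ r) (hrA : 3 * r ≤ 2 * A) :
    Real.exp (r / 2 * Real.log ((A - r / 2) / r)) * (2 * (A.choose (r / 2) * 2 ^ (r / 2))) ≤
      A.choose r * 2 ^ r := by
  set m := r / 2
  set s := r - m
  have hs : 1 ≤ s := by omega
  have hms : m + s = r := by omega
  have hr' : (1 : ℝ) ≤ r := by exact_mod_cast hr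
  have hrA' : 3 * (r : ℝ) ≤ 2 * A := by exact_mod_cast hrA
  have hrs : (r : ℝ) ≤ 2 * s := by exact_mod_cast (show r ≤ 2 * s by omega)
  have hs' : (1 : ℝ) ≤ s := by exact_mod_cast hs
  set y : ℝ := (A - r / 2) / r
  set t : ℝ := (A - r + 1) / r
  have hy : 1 ≤ y := by rw [le_div_iff₀ (by positivity)]; linarith
  have hexp : Real.exp (r / 2 * Real.log y) ≤ y ^ s := by
    rw [← Real.rpow_natCast, mul_comm, ← Real.rpow_def_of_pos (by positivity)]
    exact Real.rpow_le_rpow_of_exponent_le hy (by linarith)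
  have hyt : y * (1 + 1 / s) ≤ 2 * t := by
    simp only [y, t]
    rw [div_mul_eq_mul_div, mul_div_assoc', div_le_div_iff_of_pos_right (by positivity),
      show (1 : ℝ) + 1 / s = (s + 1) / s by field_simp, mul_div_assoc',
      div_le_iff₀ (by positivity)]
    nlinarith [mul_nonneg (sub_nonneg.2 hs') (by linarith : (0 : ℝ) ≤ 2 * A - 3 * r)]
  have hchoose : (A.choose m : ℝ) * t ^ s ≤ A.choose r :=
    choose_mul_div_pow_le_choose (by omega) (by omega) (by omega)
  calc Real.exp (r / 2 * Real.log y) * (2 * (A.choose m * 2 ^ m))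
      = 2 * Real.exp (r / 2 * Real.log y) * (A.choose m * 2 ^ m) := by ring
    _ ≤ 2 * y ^ s * (A.choose m * 2 ^ m) := by gcongr
    _ ≤ (y * (1 + 1 / s)) ^ s * (A.choose m * 2 ^ m) := by
        gcongr
        exact two_mul_pow_le_mul_one_add_inv_pow (by linarith) hs
    _ ≤ (2 * t) ^ s * (A.choose m * 2 ^ m) := by gcongr
    _ = 2 ^ r * (A.choose m * t ^ s) := by rw [← hms, pow_add, mul_pow]; ring
    _ ≤ 2 ^ r * A.choose r := by gcongr
    _ = A.choose r * 2 ^ r := mul_comm _ _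

theorem packing_subset_interactions_general (r1 r2 : ℕ) (h2 : 1 ≤ r2)
    (h3 : (r2 : ℝ) ≤ 2 / 3 * (r1.choose 2 : ℝ)) :
    ∃ B : Finset (Fin (r1.choose 2) → ℝ),
      (∀ v ∈ B, (∀ i, v i = -1 ∨ v i = 0 ∨ v i = 1) ∧ l0 v = r2) ∧
      Real.exp ((r2 : ℝ) / 2 * Real.log (((r1.choose 2 : ℝ) - (r2 : ℝ) / 2) / (r2 : ℝ))) ≤
        (B.card : ℝ) ∧
      ∀ v ∈ B, ∀ w ∈ B, v ≠ w → (r2 : ℝ) / 2 < (hamming v w : ℝ) := by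
  set n := r1.choose 2
  set m := r2 / 2
  have hn : 3 * r2 ≤ 2 * n := by exact_mod_cast (by linarith : (3 * r2 : ℝ) ≤ 2 * n)
  set T : Finset ℝ := {-1, 0, 1}
  have hT : #T - 1 = 2 := by norm_num [T]
  obtain ⟨B, hBS, hBsep, hcard⟩ :=
    exists_separated_subset_of_sphere (w := (0 : Fin n → ℝ)) (T := T) (by simp [T]) r2 m
  rw [hT, Fintype.card_fin] at hcard
  refine ⟨B, fun v hv => ?_, ?_, fun v hv w hw hvw => ?_⟩
  · obtain ⟨hvT, hv0⟩ := mem_filter.1 (hBS hv)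
    exact ⟨by simpa [T] using hvT, by rw [l0_eq_hammingDist_zero, hv0]⟩
  · have hball := sum_range_choose_mul_two_pow_le (n := n) (m := m) (by omega)
    have hpos : 0 < n.choose m := Nat.choose_pos (by omega)
    refine le_of_mul_le_mul_right ((exp_mul_log_mul_le_choose_mul_pow h2 hn).trans ?_)
      (by positivity : (0 : ℝ) < 2 * (n.choose m * 2 ^ m))
    exact_mod_cast hcard.trans (Nat.mul_le_mul_left _ hball)
  · have hfar : r2 < 2 * hammingDist v w := by have := hBsep hv hw hvw; omega
    rw [hamming_eq_hammingDist]
    linarith [show (r2 : ℝ) < 2 * hammingDist v w by exact_mod_cast hfar]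

/-- Lemma B.1. If `r1 ≥ 2`, `r2 ≥ 1` and `r2 ≤ (2/3) C(r1,2)`, then with
`A = C(r1,2)`, the set of vectors in `{-1,0,1}^A` with exactly `r2` nonzero coordinates
contains a subset of cardinality at least `exp((r2/2) log((A - r2/2)/r2))` whose elements
have pairwise Hamming distance greater than `r2/2`. -/
theorem packing_subset_interactions (r1 r2 : ℕ) (h1 : 2 ≤ r1) (h2 : 1 ≤ r2)
    (h3 : (r2 : ℝ) ≤ 2 / 3 * (r1.choose 2 : ℝ)) :
    ∃ B : Finset (Fin (r1.choose 2) → ℝ),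
      (∀ v ∈ B, (∀ i, v i = -1 ∨ v i = 0 ∨ v i = 1) ∧ l0 v = r2) ∧
      Real.exp ((r2 : ℝ) / 2 * Real.log (((r1.choose 2 : ℝ) - (r2 : ℝ) / 2) / (r2 : ℝ))) ≤
        (B.card : ℝ) ∧
      ∀ v ∈ B, ∀ w ∈ B, v ≠ w → (r2 : ℝ) / 2 < (hamming v w : ℝ) :=
  packing_subset_interactions_general r1 r2 h2 h3

end
end

section
/- (Local packing for interaction effects, Case 1 of the lower-bound proof) Let $n, p, r_1, r_2$ be positive integers with $2 \le r_1 \le p$ and $1 \le r_2 \le \frac{2}{3}\binom{r_1}{2}$, and suppose the design matrix $Z \in \mathbb{R}^{n \times (p + \binom{p}{2})}$ satisfies the Sparse Riesz Condition with $l_1 = r_1$, $l_2 = r_2$ and constants $0 < b_1 \le b_2$. Then for every $\epsilon > 0$ there exists a set $G$ of coefficient vectors $\beta \in B_0(r_1, r_2; \ddot{\mathbb{R}}^p_{strong})$ with $\|\beta\|_2 \le \epsilon$, such that $|G| \ge \exp\big(\frac{r_2}{2}\log\frac{\binom{r_1}{2} - r_2/2}{r_2}\big)$, every $\beta \in G$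 satisfies $\frac{1}{\sqrt{n}}\|Z\beta\|_2 \le b_2\epsilon$, and any two distinct $\beta, \beta' \in G$ satisfy $\frac{1}{\sqrt{n}}\|Z\beta - Z\beta'\|_2 \ge \frac{b_1\epsilon}{2}$. -/
open MeasureTheory ProbabilityTheory Real

noncomputable section

/-- Index type for two-way interactions: ordered pairs (i,j) with i < j. -/
abbrev Idx2 (p : ℕ) := {q : Fin p × Fin p // q.1 < q.2}

/-- Full index: `p` main effects plus the `p.choose 2` interactions. -/
abbrev FullIdx (p : ℕ) := Fin p ⊕ Idx2 p

/-- Squared Euclidean norm of a vector. -/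
def sqnorm {ι : Type*} [Fintype ι] (v : ι → ℝ) : ℝ := ∑ i, (v i) ^ 2

/-- Sparse Riesz Condition with sparsity levels `l1, l2` and constants `b1 ≤ b2`:
for every coefficient vector with at most `min (2 l1) p` nonzero main effects and at most
`min (2 l2) (p choose 2)` nonzero interaction effects,
`b1 ‖β‖₂ ≤ n^{-1/2} ‖Zβ‖₂ ≤ b2 ‖β‖₂`. -/
def SRC (n p : ℕ) (Z : Matrix (Fin n) (FullIdx p) ℝ) (l1 l2 : ℕ) (b1 b2 : ℝ) : Prop :=
  ∀ β : FullIdx p → ℝ,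
    l0 (fun i => β (Sum.inl i)) ≤ min (2 * l1) p →
    l0 (fun q : Idx2 p => β (Sum.inr q)) ≤ min (2 * l2) (p.choose 2) →
    b1 * Real.sqrt (sqnorm β) ≤ Real.sqrt (sqnorm (Z.mulVec β)) / Real.sqrt n ∧
      Real.sqrt (sqnorm (Z.mulVec β)) / Real.sqrt n ≤ b2 * Real.sqrt (sqnorm β)

/-- Strong heredity: a nonzero interaction requires both its main effects to be nonzero. -/
def strongHeredity {p : ℕ} (β : FullIdx p → ℝ) : Prop :=
  ∀ q : Idx2 p, β (Sum.inr q) ≠ 0 → β (Sum.inl q.1.1) ≠ 0 ∧ β (Sum.inl q.1.2) ≠ 0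

/-- Weak heredity: a nonzero interaction requires at least one main effect to be nonzero. -/
def weakHeredity {p : ℕ} (β : FullIdx p → ℝ) : Prop :=
  ∀ q : Idx2 p, β (Sum.inr q) ≠ 0 → β (Sum.inl q.1.1) ≠ 0 ∨ β (Sum.inl q.1.2) ≠ 0

/-- The ℓ0 ball: at most `r1` nonzero main effects and `r2` nonzero interactions,
under the heredity constraint `S`. -/
def B0 (p r1 r2 : ℕ) (S : (FullIdx p → ℝ) → Prop) : Set (FullIdx p → ℝ) :=
  {β | S β ∧ l0 (fun i => β (Sum.inl i)) ≤ r1 ∧ l0 (fun q : Idx2 p => β (Sum.inr q)) ≤ r2}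

/-- The noise distribution: `n` iid `N(0, σ²)` coordinates. -/
def noise (n : ℕ) (σ : ℝ) : Measure (Fin n → ℝ) :=
  Measure.pi fun _ => gaussianReal 0 (Real.toNNReal (σ ^ 2))

/-- Risk `E[(1/n)‖δ(Y) - Zβ‖₂²]` of an estimator `δ` of the mean vector `Zβ`,
where `Y = Zβ + ε` and `ε ∼ N(0, σ² Iₙ)`. -/
def risk (n p : ℕ) (σ : ℝ) (Z : Matrix (Fin n) (FullIdx p) ℝ)
    (δ : (Fin n → ℝ) → (Fin n → ℝ)) (β : FullIdx p → ℝ) : ℝ :=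
  ∫ ε, (1 / (n : ℝ)) * sqnorm (fun i => δ (Z.mulVec β + ε) i - Z.mulVec β i) ∂(noise n σ)

/-!
The interaction parts come from a Gilbert–Varshamov packing of sign vectors. Among the vectors of
`{-1, 0, 1}^d`, `d = C(r1, 2)`, of Hamming weight `s = r2`, a maximal family with pairwise distances
`> u = (s - 1)/2` covers all of them by Hamming balls of radius `u`. Consecutive Hamming spheres grow
by a factor `≥ 3` up to radius `u`, so a ball has at most `3/2 · C(d, u) 2^u` points, while there are
`C(d, s) 2^s` vectors of weight `s`; hence the family has at least
`2/3 · C(d, s) 2^s / (C(d, u) 2^u) ≥ ((d - s/2)/s)^(s/2)` members.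

Each sign vector, scaled by `ε/√(2 r2)`, is placed on the interactions among the first `r1`
variables, whose main effects are all set to `ε/√(2 r1)`. These vectors obey strong heredity, have
norm `ε`, and pairwise differ only in interactions, by at least `ε/2`; they and their differences
are sparse enough for the Sparse Riesz Condition to carry both bounds over to `Zβ`.
-/

open Finset Function

section HammingSpheres

variable {ι α : Type*} [Fintype ι] [DecidableEq α]

theorem exists_hammingSeparated_cover (S : Finset (ι → α)) (u : ℕ) :
    ∃ G ⊆ S, (∀ v ∈ G, ∀ w ∈ G, v ≠ w → u < hammingDist v w) ∧
      ∀ v ∈ S, ∃ g ∈ G, hammingDist v g ≤ u := by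
  obtain ⟨G, hG, hmax⟩ := exists_max_image
    {G ∈ S.powerset | ∀ v ∈ G, ∀ w ∈ G, v ≠ w → u < hammingDist v w} card ⟨∅, by simp⟩
  rw [mem_filter, mem_powerset] at hG
  refine ⟨G, hG.1, hG.2, fun v hv => ?_⟩
  by_contra! hfar
  have hvG : v ∉ G := fun h => by simpa using hfar v h
  have hsep : insert v G ∈ {G ∈ S.powerset | ∀ v ∈ G, ∀ w ∈ G, v ≠ w → u < hammingDist v w} := by
    rw [mem_filter, mem_powerset]
    refine ⟨insert_subset hv hG.1, fun a ha b hb hab => ?_⟩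
    rw [mem_insert] at ha hb
    rcases ha with rfl | ha <;> rcases hb with rfl | hb
    · exact absurd rfl hab
    · exact hfar b hb
    · exact hammingDist_comm b a ▸ hfar a ha
    · exact hG.2 a ha b hb hab
  have := hmax _ hsep
  rw [card_insert_of_notMem hvG] at this
  omega

variable [DecidableEq ι] [Fintype α]

theorem filter_ne_eq_iff_mem_piFinset (g v : ι → α) (D : Finset ι) :
    ({i | v i ≠ g i} : Finset ι) = D ↔
      v ∈ Fintype.piFinset fun i => if i ∈ D then univ.erase (g i) else {g i} := by
  simp only [Fintype.mem_piFinset, Finset.ext_iff, mem_filter, mem_univ, true_and]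
  refine forall_congr' fun i => ?_
  split_ifs with hi <;> simp [hi]

theorem card_filter_filter_ne_eq (g : ι → α) (D : Finset ι) :
    #{v : ι → α | ({i | v i ≠ g i} : Finset ι) = D} = (Fintype.card α - 1) ^ #D := by
  simp_rw [filter_ne_eq_iff_mem_piFinset, filter_mem_eq_inter, univ_inter,
    Fintype.card_piFinset, apply_ite card, card_erase_of_mem (mem_univ _), card_univ,
    card_singleton]
  rw [prod_ite_mem univ D, univ_inter, prod_const]

theorem card_filter_hammingDist_eq (g : ι → α) (j : ℕ) :
    #{v : ι → α | hammingDist v g = j} =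
      (Fintype.card ι).choose j * (Fintype.card α - 1) ^ j := by
  rw [card_eq_sum_card_fiberwise (s := {v : ι → α | hammingDist v g = j})
    (f := fun v : ι → α => ({i | v i ≠ g i} : Finset ι))
    (t := powersetCard j univ) fun v hv => mem_powersetCard_univ.2 (mem_filter.1 hv).2,
    sum_congr rfl fun D hD => ?_, sum_const, card_powersetCard, card_univ, smul_eq_mul]
  rw [filter_filter, ← (mem_powersetCard_univ.1 hD), ← card_filter_filter_ne_eq g D]
  congr 1
  refine filter_congr fun v _ => ⟨And.right, fun h => ⟨?_, h⟩⟩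
  rw [hammingDist, h]

theorem card_filter_hammingDist_le (g : ι → α) (u : ℕ) :
    #{v : ι → α | hammingDist v g ≤ u} =
      ∑ j ∈ range (u + 1), (Fintype.card ι).choose j * (Fintype.card α - 1) ^ j := by
  rw [card_eq_sum_card_fiberwise (s := {v : ι → α | hammingDist v g ≤ u})
    (f := (hammingDist · g)) (t := range (u + 1))
    fun v hv => mem_range.2 (Nat.lt_succ_of_le (mem_filter.1 hv).2)]
  refine sum_congr rfl fun j hj => ?_
  rw [filter_filter, ← card_filter_hammingDist_eq]
  congr 1
  refine filter_congr fun v _ => ⟨And.right, fun h => ⟨?_, h⟩⟩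
  have := mem_range.1 hj
  omega

theorem exists_hammingSeparated_card_le (S : Finset (ι → α)) (u : ℕ) :
    ∃ G ⊆ S, (∀ v ∈ G, ∀ w ∈ G, v ≠ w → u < hammingDist v w) ∧
      #S ≤ #G * ∑ j ∈ range (u + 1), (Fintype.card ι).choose j * (Fintype.card α - 1) ^ j := by
  obtain ⟨G, hGS, hsep, hcover⟩ := exists_hammingSeparated_cover S u
  refine ⟨G, hGS, hsep, ?_⟩
  calc #S ≤ #(G.biUnion fun g => {v | hammingDist v g ≤ u}) := card_le_card fun v hv => by
        obtain ⟨g, hg, hvg⟩ := hcover v hv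
        exact mem_biUnion.2 ⟨g, hg, mem_filter.2 ⟨mem_univ v, hvg⟩⟩
    _ ≤ ∑ g ∈ G, #{v | hammingDist v g ≤ u} := card_biUnion_le
    _ = _ := by simp only [card_filter_hammingDist_le, sum_const, smul_eq_mul]

end HammingSpheres

theorem choose_succ_mul_pow_succ (d m j : ℕ) :
    d.choose (j + 1) * m ^ (j + 1) * (j + 1) = d.choose j * m ^ j * (m * (d - j)) := by
  calc d.choose (j + 1) * m ^ (j + 1) * (j + 1) = d.choose (j + 1) * (j + 1) * m ^ j * m := by
        ring
    _ = d.choose j * m ^ j * (m * (d - j)) := by rw [Nat.choose_succ_right_eq]; ring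

theorem three_mul_choose_mul_two_pow_le {d j : ℕ} (h : 3 * (j + 1) ≤ 2 * (d - j)) :
    3 * (d.choose j * 2 ^ j) ≤ d.choose (j + 1) * 2 ^ (j + 1) :=
  Nat.le_of_mul_le_mul_right (c := j + 1)
    (calc 3 * (d.choose j * 2 ^ j) * (j + 1) = d.choose j * 2 ^ j * (3 * (j + 1)) := by ring
      _ ≤ d.choose j * 2 ^ j * (2 * (d - j)) := Nat.mul_le_mul_left _ h
      _ = _ := (choose_succ_mul_pow_succ d 2 j).symm)
    j.succ_pos

theorem two_mul_sum_range_le_of_three_mul_le {f : ℕ → ℕ} {u : ℕ}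
    (h : ∀ j < u, 3 * f j ≤ f (j + 1)) : 2 * ∑ j ∈ range (u + 1), f j ≤ 3 * f u := by
  induction u with
  | zero => simp; omega
  | succ u ih =>
    have := ih fun j hj => h j (by omega)
    have := h u (by omega)
    rw [sum_range_succ]
    omega

theorem mul_pow_le_of_mul_le_succ {f : ℕ → ℝ} {x : ℝ} (hx : 0 ≤ x) {u : ℕ} :
    ∀ {k : ℕ}, (∀ j < u + k, x * f j ≤ f (j + 1)) → f u * x ^ k ≤ f (u + k)
  | 0, _ => by simp
  | k + 1, h =>
    calc f u * x ^ (k + 1) = f u * x ^ k * x := pow_succ x k ▸ (mul_assoc _ _ _).symm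
      _ ≤ f (u + k) * x :=
          mul_le_mul_of_nonneg_right (mul_pow_le_of_mul_le_succ hx fun j hj => h j (by omega)) hx
      _ ≤ f (u + (k + 1)) := mul_comm x (f (u + k)) ▸ h (u + k) (by omega)

theorem mul_choose_mul_two_pow_le {d s j : ℕ} (hjs : j < s) (hsd : s ≤ d) :
    2 * ((d : ℝ) - s + 1) / s * (d.choose j * 2 ^ j) ≤ d.choose (j + 1) * 2 ^ (j + 1) := by
  have hs : (0 : ℝ) < s := by exact_mod_cast (show 0 < s by omega)
  have hjs' : (j : ℝ) + 1 ≤ s := by exact_mod_cast hjs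
  have hsd' : (s : ℝ) ≤ d := by exact_mod_cast hsd
  have hstep : (d.choose (j + 1) * 2 ^ (j + 1) : ℝ) * (j + 1) =
      (d.choose j * 2 ^ j : ℝ) * (2 * ((d : ℝ) - j)) := by
    have := congrArg (Nat.cast (R := ℝ)) (choose_succ_mul_pow_succ d 2 j)
    push_cast [Nat.cast_sub (show j ≤ d by omega)] at this
    exact this
  have hratio : 2 * ((d : ℝ) - s + 1) / s * (j + 1) ≤ 2 * (d - j) := by
    rw [div_mul_eq_mul_div, div_le_iff₀ hs]
    nlinarith
  refine le_of_mul_le_mul_right ?_ (by positivity : (0 : ℝ) < j + 1)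
  calc 2 * ((d : ℝ) - s + 1) / s * (d.choose j * 2 ^ j) * (j + 1)
      = (d.choose j * 2 ^ j) * (2 * ((d : ℝ) - s + 1) / s * (j + 1)) := by ring
    _ ≤ (d.choose j * 2 ^ j) * (2 * (d - j)) := by gcongr
    _ = _ := hstep.symm

theorem choose_mul_two_pow_mul_pow_le {d s u : ℕ} (hus : u ≤ s) (hsd : s ≤ d) :
    (d.choose u * 2 ^ u : ℝ) * (2 * ((d : ℝ) - s + 1) / s) ^ (s - u) ≤ d.choose s * 2 ^ s := by
  have hsd' : (s : ℝ) ≤ d := by exact_mod_cast hsd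
  have key := mul_pow_le_of_mul_le_succ (f := fun j => (d.choose j * 2 ^ j : ℝ)) (u := u)
    (k := s - u) (div_nonneg (by linarith) s.cast_nonneg)
    fun j hj => mul_choose_mul_two_pow_le (by omega) hsd
  rwa [Nat.add_sub_cancel' hus] at key

/-- `4/9 = (2/3)^2`, where `3/2` is the ratio of a Hamming ball to its outer sphere. -/
theorem pow_le_four_ninths_mul_pow {d s : ℕ} (hs : 1 ≤ s) (hsd : 3 * s ≤ 2 * d) :
    (((d : ℝ) - s / 2) / s) ^ s ≤ 4 / 9 * (2 * ((d : ℝ) - s + 1) / s) ^ (s + 1) := by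
  have hs0 : (0 : ℝ) < s := by exact_mod_cast hs
  have hdR : 3 * (s : ℝ) ≤ 2 * d := by exact_mod_cast hsd
  rcases hs.eq_or_lt with rfl | hs2
  · norm_num
    nlinarith
  have hs2' : (2 : ℝ) ≤ s := by exact_mod_cast hs2
  have hbc : (1 + 2 / s) * (((d : ℝ) - s / 2) / s) ≤ 2 * ((d : ℝ) - s + 1) / s := by
    rw [show (1 + 2 / (s : ℝ)) * (((d : ℝ) - s / 2) / s) = (s + 2) * (d - s / 2) / s / s by
      field_simp, div_le_div_iff_of_pos_right hs0, div_le_iff₀ hs0]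
    nlinarith
  set b := 2 * ((d : ℝ) - s + 1) / s
  set c := ((d : ℝ) - s / 2) / s
  have hc : 0 ≤ c := div_nonneg (by linarith) hs0.le
  have hb : 1 ≤ b := by rw [le_div_iff₀ hs0]; linarith
  have hbern : 3 ≤ (1 + 2 / (s : ℝ)) ^ s := by
    have := one_add_mul_le_pow (a := 2 / (s : ℝ)) (by linarith [show 0 ≤ 2 / (s:ℝ) by positivity]) s
    rwa [mul_div_cancel₀ _ hs0.ne', show (1 : ℝ) + 2 = 3 by norm_num] at this
  calc c ^ s ≤ 1 / 3 * ((1 + 2 / s) * c) ^ s := by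
        rw [mul_pow]; nlinarith [pow_nonneg hc s]
    _ ≤ 1 / 3 * b ^ s := by gcongr
    _ ≤ 4 / 9 * b ^ (s + 1) := by
        rw [pow_succ]; nlinarith [pow_nonneg (zero_le_one.trans hb) s]

theorem exp_half_mul_log_le {c N : ℝ} (hc : 0 < c) (hN : 0 ≤ N) {s : ℕ} (h : c ^ s ≤ N ^ 2) :
    exp (s / 2 * log c) ≤ N := by
  refine (pow_le_pow_iff_left₀ (exp_pos _).le hN two_ne_zero).1 ?_
  calc exp (s / 2 * log c) ^ 2 = exp (log c) ^ s := by
        rw [← exp_nat_mul, ← exp_nat_mul]; push_cast; ring_nf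
    _ = c ^ s := by rw [exp_log hc]
    _ ≤ N ^ 2 := h

theorem exists_signType_packing_card_mul_le {ι : Type*} [Fintype ι] [DecidableEq ι] {s : ℕ}
    (hsd : 3 * s ≤ 2 * Fintype.card ι) :
    ∃ G : Finset (ι → SignType), (∀ v ∈ G, hammingNorm v = s) ∧
      (∀ v ∈ G, ∀ w ∈ G, v ≠ w → s ≤ 2 * hammingDist v w) ∧
      2 * ((Fintype.card ι).choose s * 2 ^ s) ≤
        3 * #G * ((Fintype.card ι).choose ((s - 1) / 2) * 2 ^ ((s - 1) / 2)) := by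
  set d := Fintype.card ι
  set u := (s - 1) / 2
  obtain ⟨G, hGS, hsep, hcard⟩ :=
    exists_hammingSeparated_card_le {v : ι → SignType | hammingDist v 0 = s} u
  refine ⟨G, fun v hv => by simpa [hammingDist_zero_right] using (mem_filter.1 (hGS hv)).2,
    fun v hv w hw hvw => by have := hsep v hv w hw hvw; omega, ?_⟩
  have hq : Fintype.card SignType - 1 = 2 := rfl
  rw [card_filter_hammingDist_eq, hq] at hcard
  have hball : 2 * ∑ j ∈ range (u + 1), d.choose j * 2 ^ j ≤ 3 * (d.choose u * 2 ^ u) :=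
    two_mul_sum_range_le_of_three_mul_le fun j hj => three_mul_choose_mul_two_pow_le (by omega)
  nlinarith

theorem exists_signType_packing {ι : Type*} [Fintype ι] [DecidableEq ι] {s : ℕ} (hs : 1 ≤ s)
    (hsd : 3 * s ≤ 2 * Fintype.card ι) :
    ∃ G : Finset (ι → SignType), (∀ v ∈ G, hammingNorm v = s) ∧
      (∀ v ∈ G, ∀ w ∈ G, v ≠ w → s ≤ 2 * hammingDist v w) ∧
      exp (s / 2 * log ((Fintype.card ι - s / 2) / s)) ≤ #G := by
  obtain ⟨G, hweight, hsep, hcount⟩ := exists_signType_packing_card_mul_le hsd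
  refine ⟨G, hweight, hsep, ?_⟩
  set d := Fintype.card ι
  set u := (s - 1) / 2
  have hcount' : 2 * (d.choose s * 2 ^ s : ℝ) ≤ 3 * #G * (d.choose u * 2 ^ u) := by
    exact_mod_cast hcount
  have hratio := choose_mul_two_pow_mul_pow_le (d := d) (show u ≤ s by omega) (by omega)
  have hpos : (0 : ℝ) < d.choose u * 2 ^ u := by
    have := Nat.choose_pos (show u ≤ d by omega)
    positivity
  set b := 2 * ((d : ℝ) - s + 1) / s
  have hs0 : (0 : ℝ) < s := by exact_mod_cast hs
  have hdR : 3 * (s : ℝ) ≤ 2 * d := by exact_mod_cast hsd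
  have hb : 1 ≤ b := by rw [le_div_iff₀ hs0]; linarith
  have hG : 2 / 3 * b ^ (s - u) ≤ #G := by nlinarith
  refine exp_half_mul_log_le (div_pos (by linarith) hs0) (Nat.cast_nonneg _) ?_
  calc (((d : ℝ) - s / 2) / s) ^ s ≤ 4 / 9 * b ^ (s + 1) := pow_le_four_ninths_mul_pow hs hsd
    _ ≤ 4 / 9 * b ^ (2 * (s - u)) := by gcongr; omega
    _ = (2 / 3 * b ^ (s - u)) ^ 2 := by ring
    _ ≤ (#G : ℝ) ^ 2 := by gcongr

theorem l0_eq_hammingNorm {ι : Type*} [Fintype ι] (v : ι → ℝ) : l0 v = hammingNorm v := by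
  rw [l0, Nat.card_eq_fintype_card, Fintype.card_subtype, hammingNorm]

theorem Fintype.sum_extend_zero {ι κ R M : Type*} [Fintype ι] [Fintype κ] [Zero R]
    [AddCommMonoid M] {e : ι → κ} (he : Injective e) (f : ι → R) {φ : R → M} (hφ : φ 0 = 0) :
    ∑ j, φ (extend e f 0 j) = ∑ i, φ (f i) :=
  (Fintype.sum_of_injective e he _ _
    (fun j hj => by rw [extend_apply' _ _ _ (by simpa using hj), Pi.zero_apply, hφ])
    fun i => by rw [he.extend_apply]).symm

theorem sqnorm_extend_zero {ι κ : Type*} [Fintype ι] [Fintype κ] {e : ι → κ} (he : Injective e)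
    (f : ι → ℝ) : sqnorm (extend e f 0) = sqnorm f :=
  Fintype.sum_extend_zero he f (φ := (· ^ 2)) (zero_pow two_ne_zero)

theorem hammingNorm_extend_zero {ι κ : Type*} [Fintype ι] [Fintype κ] {e : ι → κ}
    (he : Injective e) (f : ι → ℝ) : hammingNorm (extend e f 0) = hammingNorm f := by
  simp only [hammingNorm, card_filter]
  exact Fintype.sum_extend_zero he f (φ := fun r => if r ≠ 0 then 1 else 0) (by simp)

theorem sqnorm_sum_elim {ι κ : Type*} [Fintype ι] [Fintype κ] (f : ι → ℝ) (g : κ → ℝ) :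
    sqnorm (Sum.elim f g) = sqnorm f + sqnorm g :=
  Fintype.sum_sum_type _

theorem card_idx2 (p : ℕ) : Fintype.card (Idx2 p) = p.choose 2 := by
  rw [Fintype.card_subtype, Fintype.card_product_filter_lt, Fintype.card_fin]

def Idx2.castLE {r p : ℕ} (h : r ≤ p) (x : Idx2 r) : Idx2 p :=
  ⟨(Fin.castLE h x.1.1, Fin.castLE h x.1.2), x.2⟩

theorem Idx2.castLE_injective {r p : ℕ} (h : r ≤ p) : Injective (Idx2.castLE h) := by
  intro x y hxy
  simpa [Idx2.castLE, Subtype.ext_iff, Prod.ext_iff, Fin.ext_iff] using hxy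

def liftInteractions {r p : ℕ} (h : r ≤ p) (c : ℝ) (θ : Idx2 r → ℝ) : FullIdx p → ℝ :=
  Sum.elim (extend (Fin.castLE h) (fun _ => c) 0) (extend (Idx2.castLE h) θ 0)

section liftInteractions

variable {r p : ℕ} (h : r ≤ p) (c : ℝ) (θ : Idx2 r → ℝ)

theorem strongHeredity_liftInteractions (hc : c ≠ 0) :
    strongHeredity (liftInteractions h c θ) := by
  intro q hq
  obtain ⟨x, rfl⟩ : ∃ x, Idx2.castLE h x = q := by
    by_contra hx
    exact hq (extend_apply' _ _ _ hx)
  simpa [liftInteractions, Idx2.castLE, (Fin.castLE_injective h).extend_apply] using hc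

theorem l0_inl_liftInteractions_le : l0 (fun i => liftInteractions h c θ (Sum.inl i)) ≤ r := by
  rw [l0_eq_hammingNorm]
  exact (hammingNorm_extend_zero (Fin.castLE_injective h) (fun _ => c)).trans_le
    (hammingNorm_le_card_fintype.trans_eq (Fintype.card_fin r))

theorem l0_inr_liftInteractions :
    l0 (fun q => liftInteractions h c θ (Sum.inr q)) = l0 θ := by
  rw [l0_eq_hammingNorm, l0_eq_hammingNorm]
  exact hammingNorm_extend_zero (Idx2.castLE_injective h) θ

theorem sqnorm_liftInteractions : sqnorm (liftInteractions h c θ) = r * c ^ 2 + sqnorm θ := by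
  rw [liftInteractions, sqnorm_sum_elim, sqnorm_extend_zero (Fin.castLE_injective h),
    sqnorm_extend_zero (Idx2.castLE_injective h)]
  simp [sqnorm]

theorem liftInteractions_sub (θ' : Idx2 r → ℝ) :
    liftInteractions h c θ - liftInteractions h c θ' = liftInteractions h 0 (θ - θ') := by
  rw [liftInteractions, liftInteractions, liftInteractions, ← Sum.elim_sub_sub, ← extend_sub,
    ← extend_sub]
  simp only [sub_self]
  rfl

theorem liftInteractions_injective : Injective (liftInteractions (p := p) h c) := by
  intro θ θ' hθ
  funext x
  simpa [liftInteractions, (Idx2.castLE_injective h).extend_apply] using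
    congrFun hθ (Sum.inr (Idx2.castLE h x))

end liftInteractions

section SignVectors

variable {ι : Type*} [Fintype ι]

theorem SignType.cast_real_injective : Injective (fun σ : SignType => (σ : ℝ)) := by
  intro σ τ h
  cases σ <;> cases τ <;> first | rfl | norm_num at h

theorem SignType.sq_cast_of_ne_zero {σ : SignType} (h : σ ≠ 0) : (σ : ℝ) ^ 2 = 1 := by
  cases σ <;> first | exact absurd rfl h | norm_num

theorem SignType.one_le_sq_cast_sub {σ τ : SignType} (h : σ ≠ τ) : 1 ≤ ((σ : ℝ) - τ) ^ 2 := by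
  cases σ <;> cases τ <;> first | exact absurd rfl h | norm_num

variable (a : ℝ) (v w : ι → SignType)

theorem l0_mul_signType_le : l0 (fun i => a * (v i : ℝ)) ≤ hammingNorm v := by
  rw [l0_eq_hammingNorm]
  exact hammingNorm_comp_le_hammingNorm (fun _ (σ : SignType) => a * (σ : ℝ)) fun _ => by simp

theorem l0_mul_signType_sub_le :
    l0 ((fun i => a * (v i : ℝ)) - fun i => a * (w i : ℝ)) ≤ hammingDist v w := by
  rw [l0_eq_hammingNorm]
  refine card_le_card fun i => ?_
  simp only [mem_filter, mem_univ, true_and, Pi.sub_apply]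
  contrapose!
  intro h
  rw [h, sub_self]

theorem sqnorm_mul_signType : sqnorm (fun i => a * (v i : ℝ)) = a ^ 2 * hammingNorm v := by
  simp only [sqnorm, hammingNorm, card_filter, Nat.cast_sum, mul_sum, mul_pow]
  refine sum_congr rfl fun i _ => ?_
  split_ifs with h
  · rw [SignType.sq_cast_of_ne_zero h, Nat.cast_one]
  · rw [not_not.1 h]; simp

theorem mul_hammingDist_le_sqnorm_mul_signType_sub :
    a ^ 2 * hammingDist v w ≤ sqnorm ((fun i => a * (v i : ℝ)) - fun i => a * (w i : ℝ)) := by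
  simp only [sqnorm, hammingDist, card_filter, Nat.cast_sum, mul_sum, Pi.sub_apply, ← mul_sub,
    mul_pow]
  refine sum_le_sum fun i _ => ?_
  split_ifs with h
  · simpa using mul_le_mul_of_nonneg_left (SignType.one_le_sq_cast_sub h) (sq_nonneg a)
  · rw [Nat.cast_zero, mul_zero]
    positivity

end SignVectors

theorem SRC.riesz_liftInteractions {n p r r2 : ℕ} {b1 b2 : ℝ} {Z : Matrix (Fin n) (FullIdx p) ℝ}
    (hZ : SRC n p Z r r2 b1 b2) (h : r ≤ p) (c : ℝ) {θ : Idx2 r → ℝ} (hθ : l0 θ ≤ 2 * r2) :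
    b1 * √(sqnorm (liftInteractions h c θ)) ≤
        √(sqnorm (Z.mulVec (liftInteractions h c θ))) / √n ∧
      √(sqnorm (Z.mulVec (liftInteractions h c θ))) / √n ≤
        b2 * √(sqnorm (liftInteractions h c θ)) := by
  have hmain := l0_inl_liftInteractions_le h c θ
  refine hZ _ (le_min (hmain.trans (by omega)) (hmain.trans h)) (le_min ?_ ?_)
  · exact (l0_inr_liftInteractions h c θ).trans_le hθ
  · rw [l0_eq_hammingNorm, ← card_idx2]
    exact hammingNorm_le_card_fintype

/-- Both the main effects and the interactions (for `v` of weight `s`) contribute `ε²/2` to the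
squared norm. -/
def packingVector {r p : ℕ} (h : r ≤ p) (ε : ℝ) (s : ℕ) (v : Idx2 r → SignType) :
    FullIdx p → ℝ :=
  liftInteractions h (ε / √(2 * r)) fun x => ε / √(2 * s) * v x

section packingVector

variable {r p s : ℕ} (h : r ≤ p) {ε : ℝ} {v w : Idx2 r → SignType}

theorem packingVector_mem_B0 (hr : 0 < r) (hε : 0 < ε) (hv : hammingNorm v = s) :
    packingVector h ε s v ∈ B0 p r s strongHeredity := by
  refine ⟨strongHeredity_liftInteractions h _ _ (by positivity),
    l0_inl_liftInteractions_le h _ _, ?_⟩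
  rw [packingVector, l0_inr_liftInteractions, ← hv]
  exact l0_mul_signType_le _ v

theorem sqrt_sqnorm_packingVector (hr : 0 < r) (hs : 0 < s) (hε : 0 ≤ ε)
    (hv : hammingNorm v = s) : √(sqnorm (packingVector h ε s v)) = ε := by
  have hr' : (0 : ℝ) < r := by exact_mod_cast hr
  have hs' : (0 : ℝ) < s := by exact_mod_cast hs
  rw [packingVector, sqnorm_liftInteractions, sqnorm_mul_signType, hv, div_pow, div_pow,
    sq_sqrt (by positivity), sq_sqrt (by positivity),
    show (r : ℝ) * (ε ^ 2 / (2 * r)) + ε ^ 2 / (2 * s) * s = ε ^ 2 by field_simp; ring,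
    sqrt_sq hε]

theorem half_le_sqrt_sqnorm_packingVector_sub (hs : 0 < s) (hvw : s ≤ 2 * hammingDist v w) :
    ε / 2 ≤ √(sqnorm (packingVector h ε s v - packingVector h ε s w)) := by
  have hs' : (0 : ℝ) < s := by exact_mod_cast hs
  have hvw' : (s : ℝ) ≤ 2 * hammingDist v w := by exact_mod_cast hvw
  refine le_sqrt_of_sq_le ?_
  rw [packingVector, packingVector, liftInteractions_sub, sqnorm_liftInteractions,
    zero_pow two_ne_zero, mul_zero, zero_add]
  refine le_trans ?_ (mul_hammingDist_le_sqnorm_mul_signType_sub _ v w)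
  rw [div_pow ε (√(2 * s)), sq_sqrt (by positivity)]
  calc (ε / 2) ^ 2 = ε ^ 2 / (2 * s) * (s / 2) := by field_simp
    _ ≤ ε ^ 2 / (2 * s) * hammingDist v w := by gcongr; linarith

theorem packingVector_injective (hε : ε ≠ 0) (hs : 0 < s) :
    Injective (packingVector h ε s) := by
  have ha : ε / √(2 * s) ≠ 0 := div_ne_zero hε (by positivity)
  refine (liftInteractions_injective h _).comp fun v w hvw => funext fun x => ?_
  exact SignType.cast_real_injective (mul_left_cancel₀ ha (congrFun hvw x))

variable {n : ℕ} {b1 b2 : ℝ} {Z : Matrix (Fin n) (FullIdx p) ℝ}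

theorem SRC.riesz_packingVector (hZ : SRC n p Z r s b1 b2) (hv : hammingNorm v = s) :
    √(sqnorm (Z.mulVec (packingVector h ε s v))) / √n ≤
      b2 * √(sqnorm (packingVector h ε s v)) :=
  (hZ.riesz_liftInteractions h _
    ((l0_mul_signType_le _ v).trans (by omega))).2

theorem SRC.riesz_packingVector_sub (hZ : SRC n p Z r s b1 b2) (hv : hammingNorm v = s)
    (hw : hammingNorm w = s) :
    b1 * √(sqnorm (packingVector h ε s v - packingVector h ε s w)) ≤
      √(sqnorm (Z.mulVec (packingVector h ε s v) - Z.mulVec (packingVector h ε s w))) / √n := by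
  rw [← Matrix.mulVec_sub, packingVector, packingVector, liftInteractions_sub]
  refine (hZ.riesz_liftInteractions h 0 ((l0_mul_signType_sub_le _ v w).trans ?_)).1
  have := hammingDist_triangle v 0 w
  rw [hammingDist_zero_right, hammingDist_zero_left, hv, hw] at this
  omega

end packingVector

theorem local_packing_interactions_general (n p r1 r2 : ℕ) (b1 b2 : ℝ)
    (Z : Matrix (Fin n) (FullIdx p) ℝ)
    (hr1 : 2 ≤ r1) (hr1p : r1 ≤ p) (hr2 : 1 ≤ r2)
    (hr2' : (r2 : ℝ) ≤ 2 / 3 * (r1.choose 2 : ℝ))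
    (hb1 : 0 < b1)
    (hSRC : SRC n p Z r1 r2 b1 b2) :
    ∀ ε : ℝ, 0 < ε →
      ∃ G : Finset (FullIdx p → ℝ),
        (∀ β ∈ G, β ∈ B0 p r1 r2 strongHeredity ∧ Real.sqrt (sqnorm β) ≤ ε) ∧
        Real.exp ((r2 : ℝ) / 2 *
            Real.log (((r1.choose 2 : ℝ) - (r2 : ℝ) / 2) / (r2 : ℝ))) ≤ (G.card : ℝ) ∧
        (∀ β ∈ G, Real.sqrt (sqnorm (Z.mulVec β)) / Real.sqrt n ≤ b2 * ε) ∧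
        ∀ β ∈ G, ∀ β' ∈ G, β ≠ β' →
          b1 * ε / 2 ≤ Real.sqrt (sqnorm (Z.mulVec β - Z.mulVec β')) / Real.sqrt n := by
  intro ε hε
  have hsd : 3 * r2 ≤ 2 * Fintype.card (Idx2 r1) := by
    rw [card_idx2]
    exact_mod_cast (by linarith : (3 * r2 : ℝ) ≤ 2 * r1.choose 2)
  obtain ⟨V, hweight, hsep, hcard⟩ := exists_signType_packing hr2 hsd
  rw [card_idx2] at hcard
  have hr1' : 0 < r1 := by omega
  refine ⟨V.image (packingVector hr1p ε r2), ?_, ?_, ?_, ?_⟩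
  · simp only [forall_mem_image]
    exact fun v hv => ⟨packingVector_mem_B0 hr1p hr1' hε (hweight v hv),
      (sqrt_sqnorm_packingVector hr1p hr1' hr2 hε.le (hweight v hv)).le⟩
  · rwa [card_image_of_injective _ (packingVector_injective hr1p hε.ne' hr2)]
  · simp only [forall_mem_image]
    intro v hv
    exact (hSRC.riesz_packingVector hr1p (hweight v hv)).trans_eq
      (by rw [sqrt_sqnorm_packingVector hr1p hr1' hr2 hε.le (hweight v hv)])
  · simp only [forall_mem_image]
    intro v hv w hw hne
    have hvw : v ≠ w := by rintro rfl; exact hne rfl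
    calc b1 * ε / 2 = b1 * (ε / 2) := by ring
      _ ≤ b1 * √(sqnorm (packingVector hr1p ε r2 v - packingVector hr1p ε r2 w)) := by
          gcongr; exact half_le_sqrt_sqnorm_packingVector_sub hr1p hr2 (hsep v hv w hw hvw)
      _ ≤ _ := hSRC.riesz_packingVector_sub hr1p (hweight v hv) (hweight w hw)

/-- local packing for interaction effects, Case 1 of the lower bound.
Under the SRC with `l1 = r1`, `l2 = r2`, if `2 ≤ r1 ≤ p` and `1 ≤ r2 ≤ (2/3) C(r1,2)`,
then for every `ε > 0` there is a set `G ⊆ B0(r1, r2; strong)` of vectors of norm at most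
`ε`, of cardinality at least `exp((r2/2) log((C(r1,2) - r2/2)/r2))`, with
`n^{-1/2}‖Zβ‖₂ ≤ b2 ε` for all `β ∈ G` and `n^{-1/2}‖Zβ - Zβ'‖₂ ≥ b1 ε/2` for all distinct
`β, β' ∈ G`. -/
theorem local_packing_interactions (n p r1 r2 : ℕ) (b1 b2 : ℝ)
    (Z : Matrix (Fin n) (FullIdx p) ℝ)
    (hn : 0 < n) (hp : 0 < p) (hr1 : 2 ≤ r1) (hr1p : r1 ≤ p) (hr2 : 1 ≤ r2)
    (hr2' : (r2 : ℝ) ≤ 2 / 3 * (r1.choose 2 : ℝ))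
    (hb1 : 0 < b1) (hb12 : b1 ≤ b2)
    (hSRC : SRC n p Z r1 r2 b1 b2) :
    ∀ ε : ℝ, 0 < ε →
      ∃ G : Finset (FullIdx p → ℝ),
        (∀ β ∈ G, β ∈ B0 p r1 r2 strongHeredity ∧ Real.sqrt (sqnorm β) ≤ ε) ∧
        Real.exp ((r2 : ℝ) / 2 *
            Real.log (((r1.choose 2 : ℝ) - (r2 : ℝ) / 2) / (r2 : ℝ))) ≤ (G.card : ℝ) ∧
        (∀ β ∈ G, Real.sqrt (sqnorm (Z.mulVec β)) / Real.sqrt n ≤ b2 * ε) ∧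
        ∀ β ∈ G, ∀ β' ∈ G, β ≠ β' →
          b1 * ε / 2 ≤ Real.sqrt (sqnorm (Z.mulVec β - Z.mulVec β')) / Real.sqrt n :=
  local_packing_interactions_general n p r1 r2 b1 b2 Z hr1 hr1p hr2 hr2' hb1 hSRC
end
end

section
/- (Local packing for main effects, Case 2 of the lower-bound proof) Let $n, p, r_1$ be positive integers with $2 \le r_1 \le \frac{2}{3} p$, and suppose the design matrix $Z \in \mathbb{R}^{n \times (p + \binom{p}{2})}$ satisfies the Sparse Riesz Condition with $l_1 = r_1$, $l_2 = r_2$ and constants $0 < b_1 \le b_2$. Then for every $\epsilon > 0$ there exists a set $G$ of coefficient vectors $\beta \in B_0(r_1, r_2; \ddot{\mathbb{R}}^p_{strong})$ with $\beta^{(2)} = 0$ and $\|\beta\|_2 \le \epsilon$, such that $|G| \ge \exp\big(\frac{r_1}{2}\log\frac{p - r_1/2}{r_1}\big)$, every $\beta \in G$ satisfies $\frac{1}{\sqrt{n}}\|Z\beta\|_2 \le b_2\epsilon$, and any two distinct $\beta, \beta' \in G$ satisfy $\frac{1}{\sqrt{n}}\|Z\beta - Z\beta'\|_2 \ge \frac{b_1\epsilon}{2}$.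 -/
open MeasureTheory ProbabilityTheory Real

noncomputable section

/-!
The packing consists of main-effect vectors `(ε / √r₁) • c` with `c ∈ {-1, 0, 1}ᵖ` having
exactly `r₁` nonzero entries and no interactions. Such vectors, and their differences, have at
most `2 r₁` nonzero main effects, so the SRC applies to them; hence it suffices to find many sign
patterns at pairwise squared distance at least `r₁ / 4`.

A maximal such family covers all `C(p, r₁) 2^r₁` patterns by balls of squared radius `r₁ / 4`
(Gilbert–Varshamov). A ball around `c₀` is counted by a Chernoff argument: for patterns with the
same support size, half the squared distance is `D(c) = ∑ᵢ cᵢ (cᵢ - c₀ᵢ)`, and weighting each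
pattern by `7^{#supp c} t^{D(c)}` makes the generating function factor over the coordinates into
`(8 + 7t²)^r₁ (1 + 14t)^(p - r₁)`. With `t = r₁ / (100 (p - r₁))` the resulting lower bound
`C(p, r₁) 2^r₁ / ball` beats `((p - r₁/2) / r₁)^(r₁/2)` because `p ≥ 3 r₁ / 2`.
-/

open Finset

theorem l0_eq_ncard {ι : Type*} (v : ι → ℝ) : l0 v = (Function.support v).ncard :=
  Nat.card_coe_set_eq _

theorem l0_zero {ι : Type*} : l0 (0 : ι → ℝ) = 0 := by
  simp [l0_eq_ncard]

theorem l0_le_card {ι : Type*} [Finite ι] (v : ι → ℝ) : l0 v ≤ Nat.card ι := by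
  rw [l0_eq_ncard]
  exact Set.ncard_le_card _

theorem l0_sub_le {ι : Type*} [Finite ι] (v w : ι → ℝ) : l0 (v - w) ≤ l0 v + l0 w := by
  simp only [l0_eq_ncard]
  exact (Set.ncard_le_ncard (Function.support_sub v w)).trans (Set.ncard_union_le _ _)

theorem l0_smul {ι : Type*} {a : ℝ} (ha : a ≠ 0) (v : ι → ℝ) : l0 (a • v) = l0 v := by
  simp only [l0_eq_ncard, Function.support_const_smul_of_ne_zero a v ha]

theorem sqnorm_smul {ι : Type*} [Fintype ι] (a : ℝ) (v : ι → ℝ) :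
    sqnorm (a • v) = a ^ 2 * sqnorm v := by
  simp only [sqnorm, Pi.smul_apply, smul_eq_mul, mul_pow, mul_sum]

theorem sqnorm_sum_elim_zero {ι κ : Type*} [Fintype ι] [Fintype κ] (v : ι → ℝ) :
    sqnorm (Sum.elim v (0 : κ → ℝ)) = sqnorm v := by
  simp [sqnorm, Fintype.sum_sum_type]

theorem SRC.bounds_sum_elim_zero {n p l1 l2 : ℕ} {Z : Matrix (Fin n) (FullIdx p) ℝ} {b1 b2 : ℝ}
    (h : SRC n p Z l1 l2 b1 b2) {v : Fin p → ℝ} (hv : l0 v ≤ 2 * l1) :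
    b1 * √(sqnorm v) ≤ √(sqnorm (Z.mulVec (Sum.elim v 0))) / √n ∧
      √(sqnorm (Z.mulVec (Sum.elim v 0))) / √n ≤ b2 * √(sqnorm v) := by
  have hmain : l0 v ≤ min (2 * l1) p :=
    le_min hv ((l0_le_card v).trans_eq (Nat.card_eq_fintype_card.trans (Fintype.card_fin p)))
  have hinter : l0 (fun q : Idx2 p => Sum.elim v (0 : Idx2 p → ℝ) (Sum.inr q)) ≤
      min (2 * l2) (p.choose 2) := by
    rw [show (fun q : Idx2 p => Sum.elim v (0 : Idx2 p → ℝ) (Sum.inr q)) = 0 from rfl, l0_zero]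
    exact Nat.zero_le _
  simpa only [sqnorm_sum_elim_zero] using h (Sum.elim v 0) hmain hinter

theorem exists_pairwise_not_rel_card_le_mul {α : Type*} {r : α → α → Prop} [DecidableRel r]
    (hrefl : ∀ a, r a a) (hsymm : ∀ a b, r a b → r b a) (C : Finset α) {B : ℝ}
    (hball : ∀ c ∈ C, (#{c' ∈ C | r c c'} : ℝ) ≤ B) :
    ∃ A ⊆ C, (A : Set α).Pairwise (fun a b => ¬ r a b) ∧ (#C : ℝ) ≤ #A * B := by
  classical
  set S := C.powerset.filter fun A : Finset α => (A : Set α).Pairwise fun a b => ¬ r a b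
  obtain ⟨A, hA, hmax⟩ := exists_max_image S card ⟨∅, by simp [S]⟩
  simp only [S, mem_filter, mem_powerset] at hA hmax
  have hcover : C ⊆ A.biUnion fun a => {c ∈ C | r a c} := by
    intro c hc
    by_contra hfar
    simp only [mem_biUnion, mem_filter, not_exists, not_and] at hfar
    have hcA : c ∉ A := fun h => hfar c h hc (hrefl c)
    have := hmax (insert c A) ⟨insert_subset hc hA.1, by
      rw [coe_insert]
      exact hA.2.insert fun a ha _ => ⟨fun h => hfar a ha hc (hsymm _ _ h), hfar a ha hc⟩⟩
    rw [card_insert_of_notMem hcA] at this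
    omega
  refine ⟨A, hA.1, hA.2, ?_⟩
  calc (#C : ℝ) ≤ ∑ a ∈ A, (#{c ∈ C | r a c} : ℝ) := by
        exact_mod_cast (card_le_card hcover).trans card_biUnion_le
    _ ≤ #A * B := by
        simpa using sum_le_card_nsmul A _ B fun a ha => hball a (hA.1 ha)

theorem Nat.div_pow_le_choose {n k : ℕ} (hkn : k ≤ n) : ((n : ℝ) / k) ^ k ≤ n.choose k := by
  have hchoose : (n.choose k : ℝ) = ∏ i ∈ range k, ((n - i : ℕ) : ℝ) / ((k - i : ℕ) : ℝ) := by
    rw [prod_div_distrib, ← Nat.cast_prod, ← Nat.cast_prod, ← Nat.descFactorial_eq_prod_range,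
      ← Nat.descFactorial_eq_prod_range, Nat.descFactorial_self,
      Nat.descFactorial_eq_factorial_mul_choose]
    push_cast
    field_simp
  rw [hchoose, show ((n : ℝ) / k) ^ k = ∏ _i ∈ range k, ((n : ℝ) / k) by
    rw [prod_const, card_range]]
  refine prod_le_prod (fun _ _ => by positivity) fun i hi => ?_
  have hik : i < k := mem_range.mp hi
  rw [Nat.cast_sub hik.le, Nat.cast_sub (hik.le.trans hkn),
    div_le_div_iff₀ (by exact_mod_cast (Nat.zero_le i).trans_lt hik) (by simpa using hik)]
  have : (i : ℝ) * k ≤ i * n := by gcongr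
  nlinarith

theorem half_add_pow_four_mul_exp_two_le {x t : ℝ} (hx : 1 / 2 ≤ x) (ht : 100 * x * t = 1) :
    (1 / 2 + x) ^ 4 * (8 + 7 * t ^ 2) ^ 8 * exp 2 ≤ 14 ^ 8 * (1 + x) ^ 8 * t := by
  have hexp : exp 2 ≤ 7.4 := by
    have := exp_one_lt_d9
    rw [show (2 : ℝ) = 1 + 1 by norm_num, exp_add]
    nlinarith [exp_pos 1]
  -- AM-GM for `1/3 + 1/3 + 1/3 + x`
  have hamgm : 9 * x ≤ (1 + x) ^ 4 := by
    nlinarith [sq_nonneg (x - 1 / 3), sq_nonneg x,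
      mul_nonneg (by linarith : 0 ≤ x) (sq_nonneg (x - 1 / 3))]
  have ht50 : t ≤ 1 / 50 := by nlinarith
  have h8 : (8 + 7 * t ^ 2) ^ 8 ≤ 8.01 ^ 8 := by gcongr; nlinarith
  have hR : (1 / 2 + x) ^ 4 ≤ (1 + x) ^ 4 := by gcongr; norm_num
  have hx4 : 0 ≤ (1 + x) ^ 4 := by positivity
  calc (1 / 2 + x) ^ 4 * (8 + 7 * t ^ 2) ^ 8 * exp 2 ≤ (1 + x) ^ 4 * 8.01 ^ 8 * 7.4 := by
        gcongr
    _ ≤ 14 ^ 8 * (1 + x) ^ 8 * t := by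
        rw [show (1 + x) ^ 8 = (1 + x) ^ 4 * (1 + x) ^ 4 by ring]
        nlinarith [mul_le_mul_of_nonneg_left hamgm hx4]

theorem sqrt_half_add_mul_exp_le {x t : ℝ} (hx : 1 / 2 ≤ x) (ht : 100 * x * t = 1) :
    √(1 / 2 + x) * (8 + 7 * t ^ 2) * exp (1 / 4) ≤ 14 * (1 + x) * t ^ (8⁻¹ : ℝ) := by
  have ht0 : 0 < t := by nlinarith
  refine (pow_le_pow_iff_left₀ (by positivity) (by positivity) (by norm_num : 8 ≠ 0)).mp ?_
  calc (√(1 / 2 + x) * (8 + 7 * t ^ 2) * exp (1 / 4)) ^ 8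
      = (√(1 / 2 + x) ^ 2) ^ 4 * (8 + 7 * t ^ 2) ^ 8 * exp (1 / 4) ^ 8 := by ring
    _ = (1 / 2 + x) ^ 4 * (8 + 7 * t ^ 2) ^ 8 * exp 2 := by
        rw [sq_sqrt (by linarith), ← exp_nat_mul]; norm_num
    _ ≤ 14 ^ 8 * (1 + x) ^ 8 * t := half_add_pow_four_mul_exp_two_le hx ht
    _ = (14 * (1 + x) * t ^ (8⁻¹ : ℝ)) ^ 8 := by
        rw [mul_pow, ← rpow_mul_natCast ht0.le, mul_pow]; norm_num

theorem exp_mul_ball_bound_le_choose {s d : ℕ} (hs : 0 < s) (hsd : s ≤ 2 * d) {t : ℝ}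
    (ht : t = s / (100 * d)) :
    exp ((s : ℝ) / 2 * log (((s + d : ℕ) - (s : ℝ) / 2) / s))
        * ((8 + 7 * t ^ 2) ^ s * (1 + 14 * t) ^ d)
      ≤ (s + d).choose s * 2 ^ s * (7 ^ s * t ^ ((s : ℝ) / 8)) := by
  have hs0 : (0 : ℝ) < s := by exact_mod_cast hs
  have hsd' : (s : ℝ) ≤ 2 * d := by exact_mod_cast hsd
  set x : ℝ := d / s with hx_def
  have hdx : (d : ℝ) = x * s := by rw [hx_def]; field_simp
  have hx : 1 / 2 ≤ x := by rw [hx_def, le_div_iff₀ hs0]; linarith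
  have hxt : 100 * x * t = 1 := by rw [ht, hdx]; field_simp
  have ht0 : 0 < t := by nlinarith
  have hR : ((s + d : ℕ) - (s : ℝ) / 2) / s = 1 / 2 + x := by push_cast; rw [hdx]; field_simp; ring
  have hp : ((s + d : ℕ) : ℝ) / s = 1 + x := by push_cast; rw [hdx]; field_simp
  have hexp : exp ((s : ℝ) / 2 * log (1 / 2 + x)) = √(1 / 2 + x) ^ s := by
    rw [← exp_log (sqrt_pos.2 (by linarith : (0 : ℝ) < 1 / 2 + x)), ← exp_nat_mul,
      log_sqrt (by linarith)]
    ring_nf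
  have hd : (1 + 14 * t) ^ d ≤ exp (1 / 4) ^ s := by
    calc (1 + 14 * t) ^ d ≤ exp (14 * t) ^ d := by gcongr; linarith [add_one_le_exp (14 * t)]
      _ = exp (d * (14 * t)) := (exp_nat_mul _ _).symm
      _ ≤ exp (s * (1 / 4)) := exp_le_exp.2 (by rw [hdx]; nlinarith)
      _ = exp (1 / 4) ^ s := exp_nat_mul _ _
  have hτ : t ^ ((s : ℝ) / 8) = (t ^ (8⁻¹ : ℝ)) ^ s := by
    rw [← rpow_mul_natCast ht0.le]; ring_nf
  have hchoose := Nat.div_pow_le_choose (n := s + d) (k := s) (by omega)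
  rw [hp] at hchoose
  calc _ = √(1 / 2 + x) ^ s * (8 + 7 * t ^ 2) ^ s * (1 + 14 * t) ^ d := by rw [hR, hexp]; ring
    _ ≤ √(1 / 2 + x) ^ s * (8 + 7 * t ^ 2) ^ s * exp (1 / 4) ^ s := by gcongr
    _ = (√(1 / 2 + x) * (8 + 7 * t ^ 2) * exp (1 / 4)) ^ s := by simp only [mul_pow]
    _ ≤ (14 * (1 + x) * t ^ (8⁻¹ : ℝ)) ^ s :=
        pow_le_pow_left₀ (by positivity) (sqrt_half_add_mul_exp_le hx hxt) s
    _ = (1 + x) ^ s * 2 ^ s * (7 ^ s * (t ^ (8⁻¹ : ℝ)) ^ s) := by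
        simp only [mul_pow, show (14 : ℝ) = 2 * 7 by norm_num]; ring
    _ ≤ _ := by rw [hτ]; gcongr

theorem SignType.coe_sq (x : SignType) : (x : ℝ) ^ 2 = if x = 0 then 0 else 1 := by
  cases x <;> simp

theorem SignType.coe_eq_zero_iff (x : SignType) : (x : ℝ) = 0 ↔ x = 0 := by
  cases x <;> simp

theorem l0_signType_cast {ι : Type*} [Fintype ι] (c : ι → SignType) :
    l0 (fun i => (c i : ℝ)) = #{i | c i ≠ 0} := by
  rw [l0_eq_ncard, ← Set.ncard_coe_finset]
  congr 1
  ext i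
  simp [SignType.coe_eq_zero_iff]

section SignCode

variable {ι : Type*} [Fintype ι] [DecidableEq ι]

def signCode (ι : Type*) [Fintype ι] [DecidableEq ι] (s : ℕ) : Finset (ι → SignType) :=
  {c | #{i | c i ≠ 0} = s}

theorem sum_sq_of_mem_signCode {s : ℕ} {c : ι → SignType} (hc : c ∈ signCode ι s) :
    ∑ i, (c i : ℝ) ^ 2 = s := by
  simp only [SignType.coe_sq, sum_ite, sum_const_zero, sum_const, nsmul_eq_mul, mul_one, zero_add]
  simpa [signCode] using hc

theorem sqnorm_sub_of_mem_signCode {s : ℕ} {c c' : ι → SignType} (hc : c ∈ signCode ι s)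
    (hc' : c' ∈ signCode ι s) :
    sqnorm (fun i => (c i : ℝ) - c' i) = 2 * ∑ i, ((c' i : ℝ) ^ 2 - c i * c' i) := by
  have hsplit : ∀ i, ((c i : ℝ) - c' i) ^ 2
      = 2 * ((c' i : ℝ) ^ 2 - c i * c' i) + ((c i : ℝ) ^ 2 - (c' i : ℝ) ^ 2) := fun i => by ring
  simp only [sqnorm, hsplit, sum_add_distrib, ← mul_sum, sum_sub_distrib,
    sum_sq_of_mem_signCode hc, sum_sq_of_mem_signCode hc', sub_self, add_zero]

theorem card_signCode (s : ℕ) : #(signCode ι s) = (Fintype.card ι).choose s * 2 ^ s := by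
  rw [card_eq_sum_card_fiberwise (f := fun c => ({i | c i ≠ 0} : Finset ι))
    (t := powersetCard s univ) (fun c hc => by simpa [signCode] using hc)]
  rw [sum_congr rfl (g := fun _ => 2 ^ s), sum_const, card_powersetCard, card_univ, smul_eq_mul]
  intro S hS
  have hS : #S = s := (mem_powersetCard.mp hS).2
  have hfiber : {c ∈ signCode ι s | ({i | c i ≠ 0} : Finset ι) = S} =
      Fintype.piFinset fun i => if i ∈ S then {-1, 1} else {0} := by
    ext c
    have hval : ∀ i, (c i ∈ if i ∈ S then ({-1, 1} : Finset SignType) else {0}) ↔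
        (c i ≠ 0 ↔ i ∈ S) := by
      intro i
      split_ifs with hi <;> cases c i <;> simp [hi]
    simp only [signCode, mem_filter, mem_univ, true_and, Fintype.mem_piFinset, hval,
      Finset.ext_iff]
    constructor
    · exact fun h => h.2
    · intro h
      refine ⟨?_, h⟩
      rw [← hS]; congr 1; ext i; simpa using h i
  rw [hfiber, Fintype.card_piFinset, prod_apply_ite, prod_const, prod_const]
  simp [hS]

/-- The factor contributed by coordinate value `γ`, against centre value `x`, to the Chernoff
weight `7^{#supp c} t^{D(c)}`; note `γ² - xγ` is that coordinate's share of `D(c)`. -/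
def signWeight (t : ℝ) (x γ : SignType) : ℝ :=
  (if γ = 0 then 1 else 7) * t ^ ((γ : ℝ) ^ 2 - x * γ)

theorem sum_signWeight (t : ℝ) (x : SignType) :
    ∑ γ, signWeight t x γ = if x = 0 then 1 + 14 * t else 8 + 7 * t ^ 2 := by
  cases x <;> simp [signWeight, SignType.univ_eq] <;> norm_num <;> ring

theorem card_ball_signCode_mul_le {s : ℕ} {c₀ : ι → SignType} (h₀ : c₀ ∈ signCode ι s) {t : ℝ}
    (ht0 : 0 < t) (ht1 : t ≤ 1) :
    (#{c ∈ signCode ι s | sqnorm (fun i => (c₀ i : ℝ) - c i) < s / 4} : ℝ)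
        * (7 ^ s * t ^ ((s : ℝ) / 8))
      ≤ (8 + 7 * t ^ 2) ^ s * (1 + 14 * t) ^ (Fintype.card ι - s) := by
  have hw : ∀ c ∈ signCode ι s,
      ∏ i, signWeight t (c₀ i) (c i) = 7 ^ s * t ^ (∑ i, ((c i : ℝ) ^ 2 - c₀ i * c i)) := by
    intro c hc
    simp only [signCode, mem_filter] at hc
    simp only [signWeight]
    rw [prod_mul_distrib, prod_ite, prod_const_one, one_mul, prod_const, rpow_sum_of_pos ht0, hc.2]
  calc _ = ∑ c ∈ signCode ι s with sqnorm (fun i => (c₀ i : ℝ) - c i) < s / 4,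
        7 ^ s * t ^ ((s : ℝ) / 8) := by rw [sum_const, nsmul_eq_mul]
    _ ≤ ∑ c ∈ signCode ι s with sqnorm (fun i => (c₀ i : ℝ) - c i) < s / 4,
          ∏ i, signWeight t (c₀ i) (c i) := by
        refine sum_le_sum fun c hc => ?_
        rw [mem_filter] at hc
        rw [hw c hc.1]
        refine mul_le_mul_of_nonneg_left (rpow_le_rpow_of_exponent_ge ht0 ht1 ?_) (by positivity)
        rw [sqnorm_sub_of_mem_signCode h₀ hc.1] at hc
        linarith [hc.2]
    _ ≤ ∑ c : ι → SignType, ∏ i, signWeight t (c₀ i) (c i) :=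
        sum_le_sum_of_subset_of_nonneg (subset_univ _) fun c _ _ =>
          prod_nonneg fun i _ => by unfold signWeight; positivity
    _ = ∏ i, if c₀ i = 0 then 1 + 14 * t else 8 + 7 * t ^ 2 := by
        rw [← Fintype.prod_sum]
        exact prod_congr rfl fun i _ => sum_signWeight t (c₀ i)
    _ = _ := by
        have hs : #{i | c₀ i ≠ 0} = s := by simpa [signCode] using h₀
        rw [prod_ite, prod_const, prod_const, mul_comm, ← card_univ,
          ← card_filter_add_card_filter_not (s := univ) (fun i => c₀ i ≠ 0), hs]
        simp

theorem exists_separated_subset_signCode {s : ℕ} (hs : 0 < s)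
    (hsp : 3 * s ≤ 2 * Fintype.card ι) :
    ∃ A ⊆ signCode ι s,
      (A : Set (ι → SignType)).Pairwise
        (fun c c' => (s : ℝ) / 4 ≤ sqnorm (fun i => (c i : ℝ) - c' i)) ∧
      exp ((s : ℝ) / 2 * log (((Fintype.card ι : ℝ) - s / 2) / s)) ≤ #A := by
  obtain ⟨d, hd⟩ := Nat.exists_eq_add_of_le (show s ≤ Fintype.card ι by omega)
  have hsd : s ≤ 2 * d := by omega
  have hs0 : (0 : ℝ) < s := by exact_mod_cast hs
  have hsd' : (s : ℝ) ≤ 2 * d := by exact_mod_cast hsd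
  set t : ℝ := s / (100 * d) with ht
  have ht0 : 0 < t := by rw [ht]; exact div_pos hs0 (by linarith)
  have ht1 : t ≤ 1 := by rw [ht, div_le_one (by linarith)]; linarith
  set ball := (8 + 7 * t ^ 2) ^ s * (1 + 14 * t) ^ d
  set weight := 7 ^ s * t ^ ((s : ℝ) / 8)
  have hweight : 0 < weight := by positivity
  obtain ⟨A, hAC, hAsep, hAcard⟩ := exists_pairwise_not_rel_card_le_mul
    (r := fun c c' => sqnorm (fun i => (c i : ℝ) - c' i) < s / 4)
    (fun c => by simpa [sqnorm] using hs0)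
    (fun c c' h => by simpa only [sqnorm, ← neg_sub (c _ : ℝ), neg_sq] using h)
    (signCode ι s) (B := ball / weight) fun c hc => by
      rw [le_div_iff₀ hweight]
      simpa only [hd, Nat.add_sub_cancel_left] using card_ball_signCode_mul_le hc ht0 ht1
  refine ⟨A, hAC, hAsep.mono' fun _ _ => le_of_not_gt, ?_⟩
  have hbound := exp_mul_ball_bound_le_choose hs hsd ht
  rw [← hd] at hbound
  rw [card_signCode] at hAcard
  push_cast at hAcard
  refine le_of_mul_le_mul_right ?_ (show 0 < ball by positivity)
  calc _ ≤ (Fintype.card ι).choose s * 2 ^ s * weight := hbound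
    _ ≤ #A * (ball / weight) * weight := by gcongr
    _ = #A * ball := by field_simp

theorem exists_separated_sparse_vectors {s : ℕ} (hs : 0 < s)
    (hsp : 3 * s ≤ 2 * Fintype.card ι) {ε : ℝ} (hε : 0 < ε) :
    ∃ V : Finset (ι → ℝ), (∀ v ∈ V, l0 v = s ∧ √(sqnorm v) = ε) ∧
      (V : Set (ι → ℝ)).Pairwise (fun v w => ε / 2 ≤ √(sqnorm (v - w))) ∧
      exp ((s : ℝ) / 2 * log (((Fintype.card ι : ℝ) - s / 2) / s)) ≤ #V := by
  obtain ⟨A, hAC, hAsep, hAcard⟩ := exists_separated_subset_signCode hs hsp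
  have hs0 : (0 : ℝ) < s := by exact_mod_cast hs
  set a := ε / √s
  have ha2 : a ^ 2 * s = ε ^ 2 := by rw [div_pow, sq_sqrt hs0.le]; field_simp
  set v : (ι → SignType) → ι → ℝ := fun c => a • fun i => (c i : ℝ)
  have hsep : ∀ c ∈ A, ∀ c' ∈ A, c ≠ c' → ε / 2 ≤ √(sqnorm (v c - v c')) :=
    fun c hc c' hc' hne => by
      rw [le_sqrt' (by positivity), ← smul_sub, sqnorm_smul]
      calc (ε / 2) ^ 2 = a ^ 2 * (s / 4) := by linear_combination (-1 / 4 : ℝ) * ha2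
        _ ≤ _ := mul_le_mul_of_nonneg_left (hAsep hc hc' hne) (sq_nonneg a)
  have hinj : Set.InjOn v A := fun c hc c' hc' h => by
    by_contra hne
    have := hsep c hc c' hc' hne
    rw [h, sub_self, show sqnorm (0 : ι → ℝ) = 0 by simp [sqnorm], sqrt_zero] at this
    linarith
  refine ⟨A.image v, ?_, ?_, by rwa [card_image_of_injOn hinj]⟩
  · simp only [mem_image]
    rintro _ ⟨c, hc, rfl⟩
    refine ⟨?_, ?_⟩
    · rw [l0_smul (by positivity), l0_signType_cast]
      simpa [signCode] using hAC hc
    · rw [sqnorm_smul, sqnorm, sum_sq_of_mem_signCode (hAC hc), ha2, sqrt_sq hε.le]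
  · simp only [coe_image]
    rintro _ ⟨c, hc, rfl⟩ _ ⟨c', hc', rfl⟩ hne
    exact hsep c hc c' hc' fun h => hne (h ▸ rfl)

end SignCode

theorem sum_elim_zero_mem_B0 {p r1 r2 : ℕ} {v : Fin p → ℝ} (hv : l0 v ≤ r1) :
    Sum.elim v 0 ∈ B0 p r1 r2 strongHeredity := by
  refine ⟨fun q hq => (hq rfl).elim, hv, ?_⟩
  rw [show (fun q : Idx2 p => Sum.elim v (0 : Idx2 p → ℝ) (Sum.inr q)) = 0 from rfl, l0_zero]
  exact Nat.zero_le _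

theorem local_packing_main_effects_general (n p r1 r2 : ℕ) (b1 b2 : ℝ)
    (Z : Matrix (Fin n) (FullIdx p) ℝ)
    (hr1 : 2 ≤ r1) (hr1p : (r1 : ℝ) ≤ 2 / 3 * (p : ℝ))
    (hb1 : 0 < b1)
    (hSRC : SRC n p Z r1 r2 b1 b2) :
    ∀ ε : ℝ, 0 < ε →
      ∃ G : Finset (FullIdx p → ℝ),
        (∀ β ∈ G, β ∈ B0 p r1 r2 strongHeredity ∧ (∀ q : Idx2 p, β (Sum.inr q) = 0) ∧
          Real.sqrt (sqnorm β) ≤ ε) ∧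
        Real.exp ((r1 : ℝ) / 2 *
            Real.log (((p : ℝ) - (r1 : ℝ) / 2) / (r1 : ℝ))) ≤ (G.card : ℝ) ∧
        (∀ β ∈ G, Real.sqrt (sqnorm (Z.mulVec β)) / Real.sqrt n ≤ b2 * ε) ∧
        ∀ β ∈ G, ∀ β' ∈ G, β ≠ β' →
          b1 * ε / 2 ≤ Real.sqrt (sqnorm (Z.mulVec β - Z.mulVec β')) / Real.sqrt n := by
  intro ε hε
  have hsp : 3 * r1 ≤ 2 * Fintype.card (Fin p) := by
    rw [Fintype.card_fin]; exact_mod_cast (show (3 * r1 : ℝ) ≤ 2 * p by linarith)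
  obtain ⟨V, hV, hVsep, hVcard⟩ := exists_separated_sparse_vectors (by omega) hsp hε
  rw [Fintype.card_fin] at hVcard
  have hinj : Function.Injective fun v : Fin p → ℝ => Sum.elim v (0 : Idx2 p → ℝ) :=
    fun v w h => funext fun i => congrFun h (Sum.inl i)
  refine ⟨V.image fun v => Sum.elim v 0, ?_, by rwa [card_image_of_injective _ hinj], ?_, ?_⟩
  · simp only [mem_image]
    rintro _ ⟨v, hv, rfl⟩
    refine ⟨sum_elim_zero_mem_B0 (hV v hv).1.le, fun q => rfl, ?_⟩
    rw [sqnorm_sum_elim_zero, (hV v hv).2]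
  · simp only [mem_image]
    rintro _ ⟨v, hv, rfl⟩
    calc _ ≤ b2 * √(sqnorm v) := (hSRC.bounds_sum_elim_zero (by rw [(hV v hv).1]; omega)).2
      _ = b2 * ε := by rw [(hV v hv).2]
  · simp only [mem_image]
    rintro _ ⟨v, hv, rfl⟩ _ ⟨w, hw, rfl⟩ hne
    have hl0 : l0 (v - w) ≤ 2 * r1 :=
      (l0_sub_le v w).trans (by rw [(hV v hv).1, (hV w hw).1]; omega)
    rw [← Matrix.mulVec_sub, ← Sum.elim_sub_sub, sub_zero]
    calc b1 * ε / 2 = b1 * (ε / 2) := by ring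
      _ ≤ b1 * √(sqnorm (v - w)) := by gcongr; exact hVsep hv hw fun h => hne (h ▸ rfl)
      _ ≤ _ := (hSRC.bounds_sum_elim_zero hl0).1

/-- local packing for main effects, Case 2 of the lower bound.
Under the SRC with `l1 = r1`, `l2 = r2`, if `2 ≤ r1 ≤ (2/3) p`, then for every `ε > 0`
there is a set `G ⊆ B0(r1, r2; strong)` of vectors with vanishing interaction part and
norm at most `ε`, of cardinality at least `exp((r1/2) log((p - r1/2)/r1))`, with
`n^{-1/2}‖Zβ‖₂ ≤ b2 ε` for all `β ∈ G` and `n^{-1/2}‖Zβ - Zβ'‖₂ ≥ b1 ε/2` for all distinct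
`β, β' ∈ G`. -/
theorem local_packing_main_effects (n p r1 r2 : ℕ) (b1 b2 : ℝ)
    (Z : Matrix (Fin n) (FullIdx p) ℝ)
    (hn : 0 < n) (hp : 0 < p) (hr1 : 2 ≤ r1) (hr1p : (r1 : ℝ) ≤ 2 / 3 * (p : ℝ))
    (hb1 : 0 < b1) (hb12 : b1 ≤ b2)
    (hSRC : SRC n p Z r1 r2 b1 b2) :
    ∀ ε : ℝ, 0 < ε →
      ∃ G : Finset (FullIdx p → ℝ),
        (∀ β ∈ G, β ∈ B0 p r1 r2 strongHeredity ∧ (∀ q : Idx2 p, β (Sum.inr q) = 0) ∧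
          Real.sqrt (sqnorm β) ≤ ε) ∧
        Real.exp ((r1 : ℝ) / 2 *
            Real.log (((p : ℝ) - (r1 : ℝ) / 2) / (r1 : ℝ))) ≤ (G.card : ℝ) ∧
        (∀ β ∈ G, Real.sqrt (sqnorm (Z.mulVec β)) / Real.sqrt n ≤ b2 * ε) ∧
        ∀ β ∈ G, ∀ β' ∈ G, β ≠ β' →
          b1 * ε / 2 ≤ Real.sqrt (sqnorm (Z.mulVec β - Z.mulVec β')) / Real.sqrt n :=
  local_packing_main_effects_general n p r1 r2 b1 b2 Z hr1 hr1p hb1 hSRC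
end
end
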